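/- Let A be a normed division algebra and let a, b, c ∈ Im A. Then the cross product satisfies ‖a × b‖² = ‖a‖²·‖b‖² − ⟨a,b⟩², and the iterated cross product satisfies a × (b × c) = −⟨a,b⟩ • c + ⟨a,c⟩ • b − (1/2) • [a,b,c], where [a,b,c] = (a*b)*c − a*(b*c) is the associator. -/

import Mathlib

open scoped RealInnerProductSpace

/-- A normed division algebra: a real inner product space with an `ℝ`-bilinear
multiplication (not necessarily associative or commutative), a two-sided
multiplicative identity `one ≠ 0`, satisfying `‖a*b‖ = ‖a‖ * ‖b‖`. -/
structure NormedDivisionAlgebra (A : Type*) [NormedAddCommGroup A] [InnerProductSpace ℝ A] where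
  mul : A →ₗ[ℝ] A →ₗ[ℝ] A
  one : A
  one_ne_zero : one ≠ 0
  one_mul : ∀ a : A, mul one a = a
  mul_one : ∀ a : A, mul a one = a
  norm_mul : ∀ a b : A, ‖mul a b‖ = ‖a‖ * ‖b‖

namespace NormedDivisionAlgebra

variable {A : Type*} [NormedAddCommGroup A] [InnerProductSpace ℝ A]

/-- `Re a`: the orthogonal projection of `a` onto the real part `Re A = ℝ · 1`. -/
noncomputable def re (D : NormedDivisionAlgebra A) (a : A) : A :=
  (⟪a, D.one⟫ / ‖D.one‖ ^ 2) • D.one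

/-- `Im a`: the orthogonal projection of `a` onto the imaginary part `Im A = (ℝ · 1)ᗮ`. -/
noncomputable def im (D : NormedDivisionAlgebra A) (a : A) : A := a - D.re a

/-- The conjugate `conj a = Re a - Im a`. -/
noncomputable def conj (D : NormedDivisionAlgebra A) (a : A) : A := D.re a - D.im a

/-- The real part `Re A = ℝ · 1` as a submodule. -/
def ReSub (D : NormedDivisionAlgebra A) : Submodule ℝ A := Submodule.span ℝ {D.one}

/-- The imaginary part `Im A = (ℝ · 1)ᗮ` as a submodule. -/
noncomputable def ImSub (D : NormedDivisionAlgebra A) : Submodule ℝ A := (Submodule.span ℝ {D.one})ᗮ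

/-- The commutator `[a, b] = a*b - b*a`. -/
def comm (D : NormedDivisionAlgebra A) (a b : A) : A := D.mul a b - D.mul b a

/-- The associator `[a, b, c] = (a*b)*c - a*(b*c)`. -/
def assoc (D : NormedDivisionAlgebra A) (a b c : A) : A :=
  D.mul (D.mul a b) c - D.mul a (D.mul b c)

/-- The cross product `a × b = Im (a*b)` (intended for `a, b ∈ Im A`). -/
noncomputable def cross (D : NormedDivisionAlgebra A) (a b : A) : A := D.im (D.mul a b)

end NormedDivisionAlgebra

/-!
Polarizing `‖a * x‖ = ‖a‖ * ‖x‖` gives `⟪a x, c y⟫ + ⟪c x, a y⟫ = 2 ⟪a, c⟫ ⟪x, y⟫` and its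
right-handed twin; with `c = 1` this says that multiplication by an imaginary element is
skew-adjoint, hence `a (a x) = -‖a‖² x` and, polarizing again, `a (b x) + b (a x) = -2 ⟪a, b⟫ x`
(and likewise on the right). The real part of `a b` is `-⟪a, b⟫`, which gives `‖a × b‖` by
Pythagoras. Adding the left identity for `a, b` applied to `c` and the right one for `b, c` applied
to `a`, and subtracting the anticommutator of `b` with `a c`, expresses `(a b) c + a (b c)` through
inner products alone; the iterated cross product is then read off.
-/

namespace NormedDivisionAlgebra

variable {A : Type*} [NormedAddCommGroup A] [InnerProductSpace ℝ A] (D : NormedDivisionAlgebra A)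

theorem norm_one : ‖D.one‖ = 1 := by
  have h : ‖D.one‖ * ‖D.one‖ = ‖D.one‖ * 1 := by rw [← D.norm_mul, D.one_mul, _root_.mul_one]
  exact mul_left_cancel₀ (norm_ne_zero_iff.mpr D.one_ne_zero) h

theorem inner_one_one : ⟪D.one, D.one⟫ = 1 := by
  rw [real_inner_self_eq_norm_sq, D.norm_one, one_pow]

theorem inner_one_of_mem_ImSub {a : A} (ha : a ∈ D.ImSub) : ⟪a, D.one⟫ = 0 :=
  Submodule.mem_orthogonal_singleton_iff_inner_left.mp ha

theorem im_eq (x : A) : D.im x = x - ⟪x, D.one⟫ • D.one := by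
  rw [im, re, D.norm_one, one_pow, div_one]

theorem im_mem_ImSub (x : A) : D.im x ∈ D.ImSub := by
  rw [ImSub, Submodule.mem_orthogonal_singleton_iff_inner_left, im_eq, inner_sub_left,
    real_inner_smul_left, D.inner_one_one, _root_.mul_one, sub_self]

theorem norm_im_sq (x : A) : ‖D.im x‖ ^ 2 = ‖x‖ ^ 2 - ⟪x, D.one⟫ ^ 2 := by
  rw [im_eq, norm_sub_sq_real, real_inner_smul_right, norm_smul, D.norm_one, _root_.mul_one,
    Real.norm_eq_abs, sq_abs]
  ring

theorem inner_mul_mul_left (a x y : A) : ⟪D.mul a x, D.mul a y⟫ = ‖a‖ ^ 2 * ⟪x, y⟫ := by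
  have h := congrArg (· ^ 2) (D.norm_mul a (x + y))
  simp only [map_add, norm_add_sq_real, mul_pow, D.norm_mul] at h
  linear_combination h / 2

theorem inner_mul_mul_right (x y b : A) : ⟪D.mul x b, D.mul y b⟫ = ⟪x, y⟫ * ‖b‖ ^ 2 := by
  have h := congrArg (· ^ 2) (D.norm_mul (x + y) b)
  simp only [map_add, LinearMap.add_apply, norm_add_sq_real, mul_pow, D.norm_mul] at h
  linear_combination h / 2

theorem inner_mul_mul_add_swap_left (a c x y : A) :
    ⟪D.mul a x, D.mul c y⟫ + ⟪D.mul c x, D.mul a y⟫ = 2 * ⟪a, c⟫ * ⟪x, y⟫ := by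
  have h := D.inner_mul_mul_left (a + c) x y
  simp only [map_add, LinearMap.add_apply, inner_add_left, inner_add_right,
    norm_add_sq_real] at h
  linear_combination h - D.inner_mul_mul_left a x y - D.inner_mul_mul_left c x y

theorem inner_mul_mul_add_swap_right (x y b d : A) :
    ⟪D.mul x b, D.mul y d⟫ + ⟪D.mul x d, D.mul y b⟫ = 2 * ⟪x, y⟫ * ⟪b, d⟫ := by
  have h := D.inner_mul_mul_right x y (b + d)
  simp only [map_add, inner_add_left, inner_add_right, norm_add_sq_real] at h
  linear_combination h - D.inner_mul_mul_right x y b - D.inner_mul_mul_right x y d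

section Imaginary

variable {D} {a b c : A}

theorem inner_mul_left_eq_neg (ha : a ∈ D.ImSub) (x y : A) :
    ⟪D.mul a x, y⟫ = -⟪x, D.mul a y⟫ := by
  have h := D.inner_mul_mul_add_swap_left a D.one x y
  rw [D.one_mul, D.one_mul, D.inner_one_of_mem_ImSub ha] at h
  linarith

theorem inner_mul_right_eq_neg (hb : b ∈ D.ImSub) (x y : A) :
    ⟪D.mul x b, y⟫ = -⟪x, D.mul y b⟫ := by
  have h := D.inner_mul_mul_add_swap_right x y b D.one
  rw [D.mul_one, D.mul_one, D.inner_one_of_mem_ImSub hb] at h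
  linarith

theorem mul_mul_self_left (ha : a ∈ D.ImSub) (x : A) :
    D.mul a (D.mul a x) = -(‖a‖ ^ 2) • x :=
  ext_inner_right ℝ fun v ↦ by
    rw [inner_mul_left_eq_neg ha, D.inner_mul_mul_left, real_inner_smul_left]
    ring

theorem mul_mul_self_right (hb : b ∈ D.ImSub) (x : A) :
    D.mul (D.mul x b) b = -(‖b‖ ^ 2) • x :=
  ext_inner_right ℝ fun v ↦ by
    rw [inner_mul_right_eq_neg hb, D.inner_mul_mul_right, real_inner_smul_left]
    ring

theorem mul_mul_add_mul_mul_left (ha : a ∈ D.ImSub) (hb : b ∈ D.ImSub) (x : A) :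
    D.mul a (D.mul b x) + D.mul b (D.mul a x) = -(2 * ⟪a, b⟫) • x := by
  have h := mul_mul_self_left (D.ImSub.add_mem ha hb) x
  simp only [map_add, LinearMap.add_apply, norm_add_sq_real] at h
  linear_combination (norm := module) h - mul_mul_self_left ha x - mul_mul_self_left hb x

theorem mul_mul_add_mul_mul_right (hb : b ∈ D.ImSub) (hc : c ∈ D.ImSub) (x : A) :
    D.mul (D.mul x b) c + D.mul (D.mul x c) b = -(2 * ⟪b, c⟫) • x := by
  have h := mul_mul_self_right (D.ImSub.add_mem hb hc) x
  simp only [map_add, LinearMap.add_apply, norm_add_sq_real] at h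
  linear_combination (norm := module) h - mul_mul_self_right hb x - mul_mul_self_right hc x

theorem mul_add_mul_swap (ha : a ∈ D.ImSub) (hb : b ∈ D.ImSub) :
    D.mul a b + D.mul b a = -(2 * ⟪a, b⟫) • D.one := by
  simpa only [D.mul_one] using mul_mul_add_mul_mul_left ha hb D.one

theorem mul_add_mul_swap_of_mem_ImSub (hb : b ∈ D.ImSub) (x : A) :
    D.mul b x + D.mul x b = (2 * ⟪x, D.one⟫) • b - (2 * ⟪b, x⟫) • D.one := by
  have h := mul_add_mul_swap hb (D.im_mem_ImSub x)
  simp only [im_eq, map_sub, map_smul, LinearMap.sub_apply, LinearMap.smul_apply, D.mul_one,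
    D.one_mul, inner_sub_right, real_inner_smul_right, D.inner_one_of_mem_ImSub hb] at h
  linear_combination (norm := module) h

theorem inner_mul_one (ha : a ∈ D.ImSub) (x : A) : ⟪D.mul a x, D.one⟫ = -⟪a, x⟫ := by
  rw [inner_mul_left_eq_neg ha, D.mul_one, real_inner_comm]

theorem inner_mul_swap (ha : a ∈ D.ImSub) (hb : b ∈ D.ImSub) (hc : c ∈ D.ImSub) :
    ⟪b, D.mul a c⟫ = -⟪a, D.mul b c⟫ := by
  have hab : ⟪D.mul a b, c⟫ + ⟪D.mul b a, c⟫ = 0 := by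
    rw [← inner_add_left, mul_add_mul_swap ha hb, real_inner_smul_left, real_inner_comm c,
      D.inner_one_of_mem_ImSub hc, mul_zero]
  linarith [inner_mul_left_eq_neg ha b c, inner_mul_left_eq_neg hb a c]

theorem cross_eq (ha : a ∈ D.ImSub) (b : A) : D.cross a b = D.mul a b + ⟪a, b⟫ • D.one := by
  rw [cross, im_eq, inner_mul_one ha, neg_smul, sub_neg_eq_add]

theorem norm_cross_sq (ha : a ∈ D.ImSub) (b : A) :
    ‖D.cross a b‖ ^ 2 = ‖a‖ ^ 2 * ‖b‖ ^ 2 - ⟪a, b⟫ ^ 2 := by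
  rw [cross, norm_im_sq, D.norm_mul, inner_mul_one ha, neg_sq, mul_pow]

theorem mul_mul_add_mul_mul (ha : a ∈ D.ImSub) (hb : b ∈ D.ImSub) (hc : c ∈ D.ImSub) :
    D.mul (D.mul a b) c + D.mul a (D.mul b c) =
      (-(2 * ⟪a, b⟫)) • c + (2 * ⟪a, c⟫) • b - (2 * ⟪b, c⟫) • a -
        (2 * ⟪a, D.mul b c⟫) • D.one := by
  have hmid := mul_add_mul_swap_of_mem_ImSub hb (D.mul a c)
  rw [inner_mul_one ha, inner_mul_swap ha hb hc] at hmid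
  linear_combination (norm := module)
    mul_mul_add_mul_mul_left ha hb c + mul_mul_add_mul_mul_right hb hc a - hmid

end Imaginary

end NormedDivisionAlgebra

open NormedDivisionAlgebra in
theorem nda_cross_norm_and_iterated {A : Type*} [NormedAddCommGroup A] [InnerProductSpace ℝ A]
    (D : NormedDivisionAlgebra A) (a b c : A)
    (ha : a ∈ D.ImSub) (hb : b ∈ D.ImSub) (hc : c ∈ D.ImSub) :
    ‖D.cross a b‖ ^ 2 = ‖a‖ ^ 2 * ‖b‖ ^ 2 - ⟪a, b⟫ ^ 2 ∧
      D.cross a (D.cross b c) =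
        (-⟪a, b⟫) • c + ⟪a, c⟫ • b - (1 / 2 : ℝ) • D.assoc a b c := by
  refine ⟨norm_cross_sq ha b, ?_⟩
  have hcross : D.cross a (D.cross b c) =
      D.mul a (D.mul b c) + ⟪b, c⟫ • a + ⟪a, D.mul b c⟫ • D.one := by
    rw [cross_eq ha, cross_eq hb, map_add, map_smul, D.mul_one, inner_add_right,
      real_inner_smul_right, real_inner_comm, D.inner_one_of_mem_ImSub ha]
    module
  rw [hcross, assoc]
  linear_combination (norm := module) (1 / 2 : ℝ) • mul_mul_add_mul_mul ha hb hc
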